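/- Let (M,T) be an ordered metric space, let A, B ⊆ M be disjoint with M = A ⊔ B and x₁ <_T x₂ for all x₁ ∈ A, x₂ ∈ B. Suppose Snake(M,T) < ∞. Define a relation <_{T'} on ∂A by: x₀ <_{T'} y₀ if for every ε > 0 there exist a point x ∈ B_ε(x₀) ∩ A and δ > 0 such that x <_T y for every y ∈ B_δ(y₀) ∩ A. Then <_{T'} is a strict total order on ∂A: for any distinct x₀, y₀ ∈ ∂A exactly one of x₀ <_{T'} y₀ and y₀ <_{T'} x₀ holds, and <_{T'} is transitive (there are no cycles x₀ <_{T'} x₁ <_{T'} ⋯ <_{T'} x_m = x₁ with m > 1). -/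

import Mathlib

open Metric Set

/-- The pair `(U₁, U₂)` contains a snake of length `s` with respect to the
strict total order `T`: a `T`-increasing sequence `a₀ <_T a₁ <_T ⋯ <_T a_s`
with even-indexed points in `U₁` and odd-indexed points in `U₂`. -/
def HasSnake {M : Type*} (T : M → M → Prop) (U₁ U₂ : Set M) (s : ℕ) : Prop :=
  ∃ a : Fin (s + 1) → M,
    (∀ i j : Fin (s + 1), i < j → T (a i) (a j)) ∧
    (∀ i : Fin (s + 1), Even (i : ℕ) → a i ∈ U₁) ∧
    (∀ i : Fin (s + 1), Odd (i : ℕ) → a i ∈ U₂)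

/-- The snake number `Snake_T(x, y)`: the greatest `s` such that for every `ε > 0`
the pair `(B_ε(x), B_ε(y))` contains a snake of length `s`; `∞` if no greatest exists. -/
noncomputable def snakeNum {M : Type*} [MetricSpace M] (T : M → M → Prop) (x y : M) : ℕ∞ :=
  ⨆ s ∈ {s : ℕ | ∀ ε : ℝ, 0 < ε → HasSnake T (ball x ε) (ball y ε) s}, (s : ℕ∞)

/-- The snake number `Snake(M, T)` of the ordered metric space: the supremum of
`Snake_T(x, y)` over all pairs of distinct points. -/
noncomputable def snakeNumSpace {M : Type*} [MetricSpace M] (T : M → M → Prop) : ℕ∞ :=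
  ⨆ (x : M) (y : M) (_ : x ≠ y), snakeNum T x y

/-- The Lebesgue covering dimension of `M` is at most `n`: every finite open cover
has a finite open refinement in which no point belongs to more than `n + 1` sets. -/
def CovDimLE (M : Type*) [TopologicalSpace M] (n : ℤ) : Prop :=
  ∀ 𝒰 : Set (Set M), 𝒰.Finite → (∀ U ∈ 𝒰, IsOpen U) → ⋃₀ 𝒰 = Set.univ →
    ∃ 𝒱 : Set (Set M), 𝒱.Finite ∧ (∀ V ∈ 𝒱, IsOpen V) ∧ ⋃₀ 𝒱 = Set.univ ∧
      (∀ V ∈ 𝒱, ∃ U ∈ 𝒰, V ⊆ U) ∧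
      ∀ x : M, ({V ∈ 𝒱 | x ∈ V}.ncard : ℤ) ≤ n + 1

/-- The order on the boundary `∂A` induced by `T`: `x₀ <_{T'} y₀` iff for every `ε > 0`
there are `x ∈ B_ε(x₀) ∩ A` and `δ > 0` with `x <_T y` for all `y ∈ B_δ(y₀) ∩ A`. -/
def boundaryOrder {M : Type*} [MetricSpace M] (T : M → M → Prop) (A : Set M) :
    M → M → Prop := fun x₀ y₀ =>
  ∀ ε : ℝ, 0 < ε → ∃ x ∈ Metric.ball x₀ ε ∩ A, ∃ δ : ℝ, 0 < δ ∧
    ∀ y ∈ Metric.ball y₀ δ ∩ A, T x y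

/-!
If `x₀ <_{T'} y₀` and `y₀ <_{T'} x₀` both held, one could alternate between points of `A` near
`x₀` and near `y₀`, each `T`-below every point of `A` close to the other centre, and so climb an
arbitrarily long `T`-increasing snake in every pair of balls around `x₀` and `y₀`. If neither
held, points of `A` near each centre would have `T`-smaller points of `A` near the other, giving
arbitrarily long decreasing snakes. Either way `Snake_T(x₀, y₀) = ∞`.
-/

namespace HasSnake

variable {M : Type*} {T : M → M → Prop} {U₁ U₂ V₁ V₂ : Set M} {s : ℕ}

theorem mono (h : HasSnake T U₁ U₂ s) (h₁ : U₁ ⊆ V₁) (h₂ : U₂ ⊆ V₂) : HasSnake T V₁ V₂ s := by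
  obtain ⟨a, ha, ha₁, ha₂⟩ := h
  exact ⟨a, ha, fun i hi => h₁ (ha₁ i hi), fun i hi => h₂ (ha₂ i hi)⟩

theorem of_le {t : ℕ} (h : HasSnake T U₁ U₂ t) (hst : s ≤ t) : HasSnake T U₁ U₂ s := by
  obtain ⟨a, ha, ha₁, ha₂⟩ := h
  exact ⟨a ∘ Fin.castLE (by omega), fun i j hij => ha _ _ hij,
    fun i hi => ha₁ _ hi, fun i hi => ha₂ _ hi⟩

theorem of_swap (h : HasSnake (Function.swap T) U₁ U₂ s) (hs : Even s) :
    HasSnake T U₁ U₂ s := by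
  obtain ⟨a, ha, ha₁, ha₂⟩ := h
  have even_rev (i : Fin (s + 1)) : Even (i.rev : ℕ) ↔ Even (i : ℕ) := by
    have hi := i.isLt
    rw [Fin.val_rev, show s + 1 - (i + 1) = s - i by omega, Nat.even_sub (by omega)]
    simp [hs]
  refine ⟨a ∘ Fin.rev, fun i j hij => ha _ _ (Fin.rev_lt_rev.mpr hij),
    fun i hi => ha₁ _ ((even_rev i).2 hi), fun i hi => ha₂ _ ?_⟩
  rw [← Nat.not_even_iff_odd, even_rev, Nat.not_even_iff_odd]
  exact hi

theorem cons {a : M} (ha : a ∈ U₁) (h : HasSnake T (U₂ ∩ {b | T a b}) (U₁ ∩ {b | T a b}) s) :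
    HasSnake T U₁ U₂ (s + 1) := by
  obtain ⟨c, hc, hc₂, hc₁⟩ := h
  refine ⟨Fin.cons a c, fun i j hij => ?_, fun i hi => ?_, fun i hi => ?_⟩
  · induction j using Fin.cases with
    | zero => exact absurd hij (Fin.not_lt_zero i)
    | succ j =>
      induction i using Fin.cases with
      | zero =>
        rcases Nat.even_or_odd (j : ℕ) with hj | hj
        · simpa using (hc₂ j hj).2
        · simpa using (hc₁ j hj).2
      | succ i => simpa using hc i j (Fin.succ_lt_succ_iff.mp hij)
  · induction i using Fin.cases with
    | zero => simpa using ha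
    | succ i =>
      simp only [Fin.val_succ, Nat.even_add_one, Nat.not_even_iff_odd] at hi
      simpa using (hc₁ i hi).1
  · induction i using Fin.cases with
    | zero => simp at hi
    | succ i =>
      simp only [Fin.val_succ, Nat.odd_add_one, Nat.not_odd_iff_even] at hi
      simpa using (hc₂ i hi).1

end HasSnake

theorem hasSnake_of_forall_exists_rel {M : Type*} {T : M → M → Prop} [IsTrans M T]
    {U₁ U₂ : Set M} (h₁ : ∀ a ∈ U₁, ∃ b ∈ U₂, T a b) (h₂ : ∀ a ∈ U₂, ∃ b ∈ U₁, T a b)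
    (hne : U₁.Nonempty) (s : ℕ) : HasSnake T U₁ U₂ s := by
  induction s generalizing U₁ U₂ with
  | zero =>
    obtain ⟨a, ha⟩ := hne
    refine ⟨fun _ => a, fun i j hij => ?_, fun _ _ => ha, fun i hi => ?_⟩
    · exact absurd hij (by omega)
    · simp [Fin.fin_one_eq_zero i] at hi
  | succ s ih =>
    obtain ⟨a, ha⟩ := hne
    obtain ⟨b, hb, hab⟩ := h₁ a ha
    refine HasSnake.cons ha (ih (fun c hc => ?_) (fun c hc => ?_) ⟨b, hb, hab⟩)
    · obtain ⟨d, hd, hcd⟩ := h₂ c hc.1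
      exact ⟨d, ⟨hd, trans_of T hc.2 hcd⟩, hcd⟩
    · obtain ⟨d, hd, hcd⟩ := h₁ c hc.1
      exact ⟨d, ⟨hd, trans_of T hc.2 hcd⟩, hcd⟩

theorem snakeNumSpace_eq_top_of_forall_hasSnake {M : Type*} [MetricSpace M] {T : M → M → Prop}
    {x y : M} (hne : x ≠ y) (h : ∀ s : ℕ, ∀ ε > 0, HasSnake T (ball x ε) (ball y ε) s) :
    snakeNumSpace T = ⊤ := by
  have hxy : snakeNum T x y = ⊤ := by
    rw [snakeNum, eq_top_iff, ← ENat.iSup_natCast]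
    exact iSup_le fun s => le_biSup (fun s : ℕ => (s : ℕ∞)) (h s)
  rw [eq_top_iff, ← hxy]
  exact le_iSup₂_of_le x y (le_iSup_of_le hne le_rfl)

section BoundaryOrder

variable {M : Type*} [MetricSpace M] {T : M → M → Prop} {A : Set M} {x₀ y₀ z₀ : M}

theorem boundaryOrder_trans [IsTrans M T] (hxy : boundaryOrder T A x₀ y₀)
    (hyz : boundaryOrder T A y₀ z₀) : boundaryOrder T A x₀ z₀ := by
  intro ε hε
  obtain ⟨x, hx, δ₁, hδ₁, hx_lt⟩ := hxy ε hε
  obtain ⟨y, hy, δ₂, hδ₂, hy_lt⟩ := hyz δ₁ hδ₁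
  exact ⟨x, hx, δ₂, hδ₂, fun z hz => trans_of T (hx_lt y hy) (hy_lt z hz)⟩

theorem boundaryOrder_asymm [IsTrans M T] (hfin : snakeNumSpace T < ⊤) (hne : x₀ ≠ y₀)
    (hxy : boundaryOrder T A x₀ y₀) : ¬ boundaryOrder T A y₀ x₀ := by
  intro hyx
  refine hfin.ne (snakeNumSpace_eq_top_of_forall_hasSnake hne fun s ε hε => ?_)
  let below (z : M) : Set M := {a | ∃ δ > 0, ∀ y ∈ ball z δ ∩ A, T a y}
  have step {u v : M} (huv : boundaryOrder T A u v) :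
      ∀ a ∈ below u, ∃ b ∈ ball u ε ∩ A ∩ below v, T a b := by
    rintro a ⟨δ, hδ, ha⟩
    obtain ⟨b, ⟨hbu, hbA⟩, hb⟩ := huv (min δ ε) (lt_min hδ hε)
    exact ⟨b, ⟨⟨ball_subset_ball (min_le_right _ _) hbu, hbA⟩, hb⟩,
      ha b ⟨ball_subset_ball (min_le_left _ _) hbu, hbA⟩⟩
  obtain ⟨a, ha, ha_below⟩ := hxy ε hε
  exact (hasSnake_of_forall_exists_rel (U₁ := ball x₀ ε ∩ A ∩ below y₀)
    (U₂ := ball y₀ ε ∩ A ∩ below x₀) (fun a ha => step hyx a ha.2)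
    (fun a ha => step hxy a ha.2) ⟨a, ha, ha_below⟩ s).mono
    (fun _ h => h.1.1) (fun _ h => h.1.1)

theorem boundaryOrder_total [IsStrictTotalOrder M T] (hfin : snakeNumSpace T < ⊤)
    (hx₀ : x₀ ∈ closure A) (hne : x₀ ≠ y₀) :
    boundaryOrder T A x₀ y₀ ∨ boundaryOrder T A y₀ x₀ := by
  by_contra! h
  have refute {u v : M} (huv : ¬ boundaryOrder T A u v) :
      ∃ r > 0, ∀ a ∈ ball u r ∩ A, ∀ δ > 0, ∃ b ∈ ball v δ ∩ A, ¬ T a b := by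
    simpa only [boundaryOrder, not_forall, not_exists, not_and, exists_prop] using huv
  obtain ⟨r₁, hr₁, h₁⟩ := refute h.1
  obtain ⟨r₂, hr₂, h₂⟩ := refute h.2
  refine hfin.ne (snakeNumSpace_eq_top_of_forall_hasSnake hne fun s ε hε => ?_)
  set r := min (min ε (dist x₀ y₀ / 2)) (min r₁ r₂)
  have hr : 0 < r := lt_min (lt_min hε (by simpa using hne)) (lt_min hr₁ hr₂)
  have hrε : r ≤ ε := (min_le_left _ _).trans (min_le_left _ _)
  have hr_half : r ≤ dist x₀ y₀ / 2 := (min_le_left _ _).trans (min_le_right _ _)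
  have hdisj : Disjoint (ball x₀ r) (ball y₀ r) := ball_disjoint_ball (by linarith)
  -- The smaller point found near `v` differs from `a` because the two balls are disjoint.
  have step {u v : M} {r' : ℝ} (hr' : r ≤ r') (hd : Disjoint (ball u r) (ball v r))
      (huv : ∀ a ∈ ball u r' ∩ A, ∀ δ > 0, ∃ b ∈ ball v δ ∩ A, ¬ T a b) :
      ∀ a ∈ ball u r ∩ A, ∃ b ∈ ball v r ∩ A, T b a := by
    intro a ha
    obtain ⟨b, hb, hab⟩ := huv a ⟨ball_subset_ball hr' ha.1, ha.2⟩ r hr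
    refine ⟨b, hb, ?_⟩
    by_contra hba
    exact hd.ne_of_mem ha.1 hb.1 (Std.Trichotomous.trichotomous a b hab hba)
  obtain ⟨a, haA, ha⟩ := Metric.mem_closure_iff.mp hx₀ r hr
  have hsnake := hasSnake_of_forall_exists_rel (T := Function.swap T)
    (step ((min_le_right _ _).trans (min_le_left _ _)) hdisj h₁)
    (step ((min_le_right _ _).trans (min_le_right _ _)) hdisj.symm h₂)
    ⟨a, mem_ball'.mpr ha, haA⟩ (2 * s)
  exact ((hsnake.of_swap (even_two_mul s)).of_le (by omega)).mono
    (inter_subset_left.trans (ball_subset_ball hrε)) (inter_subset_left.trans (ball_subset_ball hrε))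

end BoundaryOrder

theorem boundaryOrder_isStrictTotalOrder_general
    {M : Type*} [MetricSpace M]
    (T : M → M → Prop) (hT : IsStrictTotalOrder M T)
    (A : Set M)
    (hfin : snakeNumSpace T < ⊤) :
    (∀ x₀ ∈ frontier A, ∀ y₀ ∈ frontier A, x₀ ≠ y₀ →
      Xor' (boundaryOrder T A x₀ y₀) (boundaryOrder T A y₀ x₀)) ∧
    (∀ x₀ ∈ frontier A, ∀ y₀ ∈ frontier A, ∀ z₀ ∈ frontier A,
      boundaryOrder T A x₀ y₀ → boundaryOrder T A y₀ z₀ → boundaryOrder T A x₀ z₀) := by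
  have := hT
  refine ⟨fun x₀ hx₀ y₀ _ hne => ?_, fun _ _ _ _ _ _ => boundaryOrder_trans⟩
  rcases boundaryOrder_total hfin (frontier_subset_closure hx₀) hne with h | h
  · exact Or.inl ⟨h, boundaryOrder_asymm hfin hne h⟩
  · exact Or.inr ⟨h, boundaryOrder_asymm hfin hne.symm h⟩

/-- If `(M, T)` is an ordered metric space with `Snake(M,T) < ∞` and `M = A ⊔ B` with
every point of `A` being `T`-smaller than every point of `B`, then the induced relation
`<_{T'}` is a strict total order on `∂A`: for distinct points exactly one of
`x₀ <_{T'} y₀`, `y₀ <_{T'} x₀` holds, and the relation is transitive. -/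
theorem boundaryOrder_isStrictTotalOrder
    {M : Type*} [MetricSpace M]
    (T : M → M → Prop) (hT : IsStrictTotalOrder M T)
    (A B : Set M) (hdisj : Disjoint A B) (hunion : A ∪ B = Set.univ)
    (hord : ∀ x₁ ∈ A, ∀ x₂ ∈ B, T x₁ x₂)
    (hfin : snakeNumSpace T < ⊤) :
    (∀ x₀ ∈ frontier A, ∀ y₀ ∈ frontier A, x₀ ≠ y₀ →
      Xor' (boundaryOrder T A x₀ y₀) (boundaryOrder T A y₀ x₀)) ∧
    (∀ x₀ ∈ frontier A, ∀ y₀ ∈ frontier A, ∀ z₀ ∈ frontier A,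
      boundaryOrder T A x₀ y₀ → boundaryOrder T A y₀ z₀ → boundaryOrder T A x₀ z₀) :=
  boundaryOrder_isStrictTotalOrder_general T hT A hfin
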